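/- The first homology of a box product of permutographs is generated by length 4 and length 6 cycles: let G = G_1 □ ⋯ □ G_m be the box product of permutographs G_j on words Fin N_j → Fin s_j (j = 1, …, m). Then every element of ker ∂ that lies in the ℤ-span of the ordered pairs of adjacent vertices of G is a ℤ-linear combination of edge chains of closed walks in G of length 2, length 4, and length 6. -/

import Mathlib

/-- The permutograph on words `Fin N → Fin s`: two words are adjacent iff one is obtained
from the other by exchanging two distinct letters sitting in adjacent positions `i, i+1`. -/
def permutograph (N s : ℕ) : SimpleGraph (Fin N → Fin s) where
  Adj v w := ∃ (i : ℕ) (h : i + 1 < N),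
      v ⟨i, Nat.lt_of_succ_lt h⟩ ≠ v ⟨i + 1, h⟩ ∧
      w = v ∘ Equiv.swap ⟨i, Nat.lt_of_succ_lt h⟩ ⟨i + 1, h⟩
  symm := by
    constructor
    rintro v w ⟨i, h, hne, rfl⟩
    refine ⟨i, h, ?_, ?_⟩
    · simpa using hne.symm
    · funext k
      simp
  loopless := by
    constructor
    rintro v ⟨i, h, hne, hv⟩
    apply hne
    conv_lhs => rw [hv]
    simp

/-- The box product of a family of simple graphs: two tuples are adjacent iff they agree in
all coordinates except exactly one, in which they are adjacent. -/
def boxProdFamily {ι : Type*} {V : ι → Type*} (G : ∀ i, SimpleGraph (V i)) :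
    SimpleGraph (∀ i, V i) where
  Adj a b := ∃ i, (G i).Adj (a i) (b i) ∧ ∀ j, j ≠ i → a j = b j
  symm := by
    constructor
    rintro a b ⟨i, hadj, hj⟩
    exact ⟨i, hadj.symm, fun j hne => (hj j hne).symm⟩
  loopless := by
    constructor
    rintro a ⟨i, hadj, -⟩
    exact hadj.ne rfl

/-- The boundary map from the free `ℤ`-module on the ordered pairs of adjacent vertices
(darts) of a simple graph to the free `ℤ`-module on its vertices, `(v,w) ↦ w - v`. -/
noncomputable def graphBoundary {V : Type*} (G : SimpleGraph V) :
    (G.Dart →₀ ℤ) →ₗ[ℤ] (V →₀ ℤ) :=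
  Finsupp.lift (V →₀ ℤ) ℤ G.Dart fun d =>
    Finsupp.single d.toProd.2 1 - Finsupp.single d.toProd.1 1

/-- The edge chain of a walk: the formal sum of its consecutive directed edges. -/
noncomputable def edgeChain {V : Type*} {G : SimpleGraph V} {u v : V} (w : G.Walk u v) :
    G.Dart →₀ ℤ :=
  (w.darts.map fun d => Finsupp.single d (1 : ℤ)).sum

/-! Bubble sort combs every word of the box product to the sorted word of its component:
`bubbleChain v` is the chain of the path from `v` that always swaps the lexicographically first
descent. A cycle is the combination of the fundamental cycles `(v, w) + P w - P v` of its darts, so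
it suffices to generate these. Let `w` swap an ascent of `v`. Either `w` is sorted back to `v`,
giving a closed walk of length 2, or `v` and `w` sort through the same first descent, and the two
sorting steps close up with the edge `v w` into a square (disjoint transpositions commute) or a
hexagon (braid relation). The other edges of the polygon lie lower in the weight
`∑ (N - k) * v k`, which drops under every descent swap, so induction on it applies. -/

open Finsupp SimpleGraph

section Chains

variable {V : Type*} {G : SimpleGraph V}

@[simp] lemma edgeChain_nil {u : V} : edgeChain (Walk.nil : G.Walk u u) = 0 := by
  simp [edgeChain]

@[simp] lemma edgeChain_cons {u v w : V} (h : G.Adj u v) (p : G.Walk v w) :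
    edgeChain (Walk.cons h p) = single ⟨(u, v), h⟩ 1 + edgeChain p := by
  simp [edgeChain]

@[simp] lemma edgeChain_append {u v w : V} (p : G.Walk u v) (q : G.Walk v w) :
    edgeChain (p.append q) = edgeChain p + edgeChain q := by
  simp [edgeChain, Walk.darts_append]

variable (G) in
noncomputable def shortCycleSpan : Submodule ℤ (G.Dart →₀ ℤ) :=
  Submodule.span ℤ {x | ∃ (u : V) (w : G.Walk u u),
    (w.length = 2 ∨ w.length = 4 ∨ w.length = 6) ∧ x = edgeChain w}

lemma single_add_single_swap_mem_shortCycleSpan {u v : V} (h : G.Adj u v) :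
    single ⟨(u, v), h⟩ 1 + single ⟨(v, u), h.symm⟩ 1 ∈ shortCycleSpan G :=
  Submodule.subset_span ⟨u, .cons h (.cons h.symm .nil), by simp, by simp⟩

/-- For `P v` the chain of a path from `v` to a root of a spanning forest, this is the
fundamental cycle of the dart `d`. -/
noncomputable def fundamentalCycle (P : V → G.Dart →₀ ℤ) (d : G.Dart) : G.Dart →₀ ℤ :=
  single d 1 + P d.toProd.2 - P d.toProd.1

lemma fundamentalCycle_symm_mem_iff (P : V → G.Dart →₀ ℤ) (d : G.Dart) :
    fundamentalCycle P d.symm ∈ shortCycleSpan G ↔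
      fundamentalCycle P d ∈ shortCycleSpan G := by
  obtain ⟨⟨u, v⟩, h⟩ := d
  have hsymm : fundamentalCycle P ⟨(v, u), h.symm⟩ =
      (single ⟨(u, v), h⟩ 1 + single ⟨(v, u), h.symm⟩ 1) -
        fundamentalCycle P ⟨(u, v), h⟩ := by
    simp only [fundamentalCycle]
    abel
  change fundamentalCycle P ⟨(v, u), h.symm⟩ ∈ _ ↔ _
  rw [hsymm,
    Submodule.sub_mem_iff_right _ (single_add_single_swap_mem_shortCycleSpan h)]

lemma edgeChain_add_sub_mem_shortCycleSpan (P : V → G.Dart →₀ ℤ) {a b : V} (p : G.Walk a b)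
    (hp : ∀ d ∈ p.darts, fundamentalCycle P d ∈ shortCycleSpan G) :
    edgeChain p + P b - P a ∈ shortCycleSpan G := by
  induction p with
  | nil => simp
  | @cons u v w h p ih =>
    have hd := hp _ List.mem_cons_self
    have hrest := ih fun d hd => hp d (List.mem_cons_of_mem _ hd)
    convert add_mem hd hrest using 1
    simp only [edgeChain_cons, fundamentalCycle]
    abel

lemma fundamentalCycle_mem_of_eq_single_add (P : V → G.Dart →₀ ℤ) {v w : V}
    (hvw : G.Adj v w)
    (hPw : P w = single ⟨(w, v), hvw.symm⟩ 1 + P v) :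
    fundamentalCycle P ⟨(v, w), hvw⟩ ∈ shortCycleSpan G := by
  convert single_add_single_swap_mem_shortCycleSpan hvw using 1
  simp only [fundamentalCycle, hPw]
  abel

/-- The fundamental cycle of `(v, w)` differs by generated cycles from the closed walk
`v → w → y ⇝ x → v` of length `4` or `6`. -/
lemma fundamentalCycle_mem_of_walk (P : V → G.Dart →₀ ℤ) {v w x y : V} (hvw : G.Adj v w)
    (hvx : G.Adj v x) (hwy : G.Adj w y)
    (hPv : P v = single ⟨(v, x), hvx⟩ 1 + P x) (hPw : P w = single ⟨(w, y), hwy⟩ 1 + P y)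
    (p : G.Walk y x) (hp : p.length = 1 ∨ p.length = 3)
    (hgood : ∀ d ∈ p.darts, fundamentalCycle P d ∈ shortCycleSpan G) :
    fundamentalCycle P ⟨(v, w), hvw⟩ ∈ shortCycleSpan G := by
  let c : G.Walk v v := .cons hvw (.cons hwy (p.append (.cons hvx.symm .nil)))
  have hc : edgeChain c ∈ shortCycleSpan G :=
    Submodule.subset_span ⟨v, c, by simp [c]; omega, rfl⟩
  have hpath := edgeChain_add_sub_mem_shortCycleSpan P p hgood
  have hloop := single_add_single_swap_mem_shortCycleSpan hvx
  convert sub_mem (sub_mem hc hpath) hloop using 1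
  simp only [fundamentalCycle, hPv, hPw, c, edgeChain_cons, edgeChain_append, edgeChain_nil]
  abel

theorem mem_shortCycleSpan_of_graphBoundary_eq_zero (P : V → G.Dart →₀ ℤ)
    (hP : ∀ d, fundamentalCycle P d ∈ shortCycleSpan G) {c : G.Dart →₀ ℤ}
    (hc : graphBoundary G c = 0) : c ∈ shortCycleSpan G := by
  have hsplit : linearCombination ℤ (fundamentalCycle P) =
      LinearMap.id + linearCombination ℤ P ∘ₗ graphBoundary G := by
    refine Finsupp.lhom_ext' fun d => LinearMap.ext_ring ?_
    simp [graphBoundary, fundamentalCycle]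
    abel
  have hc' : linearCombination ℤ (fundamentalCycle P) c = c := by
    simp [hsplit, hc]
  have hrange : c ∈ LinearMap.range (linearCombination ℤ (fundamentalCycle P)) := ⟨c, hc'⟩
  rw [range_linearCombination] at hrange
  exact Submodule.span_le.mpr (Set.range_subset_iff.mpr hP) hrange

end Chains

lemma sum_mul_comp_swap_lt {ι : Type*} [Fintype ι] [DecidableEq ι] (f g : ι → ℕ) {a b : ι}
    (hab : a ≠ b) (hf : f b < f a) (hg : g b < g a) :
    ∑ k, f k * g (Equiv.swap a b k) < ∑ k, f k * g k := by
  rw [← Finset.sum_add_sum_compl {a, b}, ← Finset.sum_add_sum_compl {a, b} (fun k => f k * g k),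
    Finset.sum_pair hab, Finset.sum_pair hab, Equiv.swap_apply_left, Equiv.swap_apply_right]
  have hrest :
      ∑ k ∈ {a, b}ᶜ, f k * g (Equiv.swap a b k) = ∑ k ∈ {a, b}ᶜ, f k * g k := by
    refine Finset.sum_congr rfl fun k hk => ?_
    simp only [Finset.mem_compl, Finset.mem_insert, Finset.mem_singleton, not_or] at hk
    rw [Equiv.swap_apply_of_ne_of_ne hk.1 hk.2]
  rw [hrest, add_lt_add_iff_right]
  nlinarith

namespace BoxPermutograph

variable {m : ℕ} {N s : Fin m → ℕ}

abbrev Word (N s : Fin m → ℕ) := ∀ j : Fin m, Fin (N j) → Fin (s j)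

abbrev graph (N s : Fin m → ℕ) : SimpleGraph (Word N s) :=
  boxProdFamily fun j => permutograph (N j) (s j)

def permAt (v : Word N s) (j : Fin m) (σ : Equiv.Perm (Fin (N j))) : Word N s :=
  Function.update v j (v j ∘ σ)

lemma permAt_apply_of_ne (v : Word N s) {j j' : Fin m} (σ : Equiv.Perm (Fin (N j)))
    (hj : j' ≠ j) : permAt v j σ j' = v j' :=
  Function.update_of_ne hj _ _

lemma permAt_apply_self (v : Word N s) (j : Fin m) (σ : Equiv.Perm (Fin (N j)))
    (k : Fin (N j)) : permAt v j σ j k = v j (σ k) := by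
  simp [permAt]

lemma permAt_permAt (v : Word N s) (j : Fin m) (σ τ : Equiv.Perm (Fin (N j))) :
    permAt (permAt v j σ) j τ = permAt v j (σ * τ) := by
  simp only [permAt, Function.update_self, Function.update_idem]
  rfl

lemma permAt_comm (v : Word N s) {j j' : Fin m} (σ : Equiv.Perm (Fin (N j)))
    (τ : Equiv.Perm (Fin (N j'))) (hj : j ≠ j') :
    permAt (permAt v j σ) j' τ = permAt (permAt v j' τ) j σ := by
  simp only [permAt, Function.update_of_ne hj, Function.update_of_ne hj.symm]
  exact Function.update_comm hj _ _ _

lemma permAt_one (v : Word N s) (j : Fin m) : permAt v j 1 = v := by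
  simp [permAt]

def adjSwap {n : ℕ} (i : ℕ) (h : i + 1 < n) : Equiv.Perm (Fin n) :=
  Equiv.swap ⟨i, by omega⟩ ⟨i + 1, h⟩

lemma adjSwap_mul_self {n i : ℕ} (h : i + 1 < n) : adjSwap i h * adjSwap i h = 1 :=
  Equiv.swap_mul_self _ _

lemma adjSwap_braid {n i : ℕ} (h : i + 2 < n) :
    adjSwap (i + 1) h * adjSwap i (by omega) * adjSwap (i + 1) h =
      adjSwap i (by omega) * adjSwap (i + 1) h * adjSwap i (by omega) := by
  ext k
  simp only [adjSwap, Equiv.Perm.mul_apply, Equiv.swap_apply_def, Fin.ext_iff]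
  split_ifs <;> simp only [not_true_eq_false] at * <;> omega

lemma adjSwap_comm {n i i' : ℕ} (h : i + 1 < n) (h' : i' + 1 < n)
    (hfar : i + 1 < i' ∨ i' + 1 < i) :
    adjSwap i h * adjSwap i' h' = adjSwap i' h' * adjSwap i h := by
  ext k
  simp only [adjSwap, Equiv.Perm.mul_apply, Equiv.swap_apply_def, Fin.ext_iff]
  split_ifs <;> simp only at * <;> omega

def swapAt (v : Word N s) (j : Fin m) (i : ℕ) (h : i + 1 < N j) : Word N s :=
  permAt v j (adjSwap i h)

lemma swapAt_swapAt (v : Word N s) (j : Fin m) (i : ℕ) (h : i + 1 < N j) :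
    swapAt (swapAt v j i h) j i h = v := by
  rw [swapAt, swapAt, permAt_permAt, adjSwap_mul_self, permAt_one]

lemma swapAt_comm (v : Word N s) {j j' : Fin m} {i i' : ℕ} (h : i + 1 < N j)
    (h' : i' + 1 < N j') (hfar : j ≠ j' ∨ i + 1 < i' ∨ i' + 1 < i) :
    swapAt (swapAt v j i h) j' i' h' = swapAt (swapAt v j' i' h') j i h := by
  by_cases hj : j = j'
  · subst hj
    simp only [swapAt, permAt_permAt, adjSwap_comm h h' (by tauto)]
  · exact permAt_comm v _ _ hj

lemma swapAt_braid (v : Word N s) (j : Fin m) (i : ℕ) (h : i + 2 < N j) :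
    swapAt (swapAt (swapAt v j (i + 1) h) j i (by omega)) j (i + 1) h =
      swapAt (swapAt (swapAt v j i (by omega)) j (i + 1) h) j i (by omega) := by
  simp only [swapAt, permAt_permAt, adjSwap_braid]

lemma swapAt_apply_of_ne (v : Word N s) {j j' : Fin m} (i : ℕ) (h : i + 1 < N j)
    (hj : j' ≠ j) : swapAt v j i h j' = v j' :=
  permAt_apply_of_ne v _ hj

lemma swapAt_apply_self (v : Word N s) (j : Fin m) (i : ℕ) (h : i + 1 < N j) (k : ℕ)
    (hk : k < N j) :
    swapAt v j i h j ⟨k, hk⟩ =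
      if k = i then v j ⟨i + 1, h⟩
      else if k = i + 1 then v j ⟨i, by omega⟩
      else v j ⟨k, hk⟩ := by
  simp only [swapAt, permAt_apply_self, adjSwap, Equiv.swap_apply_def, Fin.ext_iff]
  split_ifs <;> rfl

lemma adj_swapAt (v : Word N s) (j : Fin m) (i : ℕ) (h : i + 1 < N j)
    (hne : v j ⟨i, by omega⟩ ≠ v j ⟨i + 1, h⟩) : (graph N s).Adj v (swapAt v j i h) :=
  ⟨j, ⟨i, h, hne, by simp [swapAt, permAt, adjSwap]⟩,
    fun _ hj => (swapAt_apply_of_ne v i h hj).symm⟩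

lemma exists_swapAt_of_adj {v w : Word N s} (hvw : (graph N s).Adj v w) :
    ∃ j i, ∃ h : i + 1 < N j,
      v j ⟨i, by omega⟩ ≠ v j ⟨i + 1, h⟩ ∧ w = swapAt v j i h := by
  obtain ⟨j, ⟨i, h, hne, hw⟩, hrest⟩ := hvw
  refine ⟨j, i, h, hne, ?_⟩
  symm
  rw [swapAt, permAt, Function.update_eq_iff]
  exact ⟨hw.symm, hrest⟩

lemma swapAt_apply_of_far (v : Word N s) {j j' : Fin m} {i k : ℕ} (h : i + 1 < N j)
    (hk : k < N j') (hfar : j' ≠ j ∨ k ≠ i ∧ k ≠ i + 1) :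
    swapAt v j i h j' ⟨k, hk⟩ = v j' ⟨k, hk⟩ := by
  by_cases hj : j' = j
  · subst hj
    rw [swapAt_apply_self, if_neg (by omega), if_neg (by omega)]
  · rw [swapAt_apply_of_ne v i h hj]

def IsDescent (v : Word N s) (j : Fin m) (i : ℕ) : Prop :=
  ∃ h : i + 1 < N j, v j ⟨i + 1, h⟩ < v j ⟨i, by omega⟩

def IsFirstDescent (v : Word N s) (j : Fin m) (i : ℕ) : Prop :=
  IsDescent v j i ∧ ∀ j' i', toLex (j', i') < toLex (j, i) → ¬IsDescent v j' i'

lemma IsDescent.adj_swapAt {v : Word N s} {j : Fin m} {i : ℕ} (hd : IsDescent v j i) :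
    (graph N s).Adj v (swapAt v j i hd.fst) :=
  BoxPermutograph.adj_swapAt v j i hd.fst hd.snd.ne'

lemma isDescent_swapAt_self {v : Word N s} {j : Fin m} {i : ℕ} (h : i + 1 < N j)
    (hasc : v j ⟨i, by omega⟩ < v j ⟨i + 1, h⟩) : IsDescent (swapAt v j i h) j i :=
  ⟨h, by simpa [swapAt_apply_self] using hasc⟩

lemma isDescent_swapAt_iff (v : Word N s) {j j0 : Fin m} {i i0 : ℕ} (h0 : i0 + 1 < N j0)
    (hfar : j ≠ j0 ∨ i + 1 < i0 ∨ i0 + 1 < i) :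
    IsDescent (swapAt v j0 i0 h0) j i ↔ IsDescent v j i := by
  refine exists_congr fun h => ?_
  rw [swapAt_apply_of_far v h0 _ (by omega), swapAt_apply_of_far v h0 _ (by omega)]

lemma exists_isFirstDescent_le {v : Word N s} {j : Fin m} {i : ℕ} (h : IsDescent v j i) :
    ∃ j' i', IsFirstDescent v j' i' ∧ toLex (j', i') ≤ toLex (j, i) := by
  obtain ⟨p, hp, hmin⟩ := wellFounded_lt.has_min
    {p : Fin m ×ₗ ℕ | IsDescent v (ofLex p).1 (ofLex p).2} ⟨toLex (j, i), h⟩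
  exact ⟨(ofLex p).1, (ofLex p).2, ⟨hp, fun j' i' hlt hd => hmin (toLex (j', i')) hd hlt⟩,
    not_lt.mp (hmin _ h)⟩

lemma IsFirstDescent.unique {v : Word N s} {j j' : Fin m} {i i' : ℕ} (h : IsFirstDescent v j i)
    (h' : IsFirstDescent v j' i') : j = j' ∧ i = i' := by
  rcases lt_trichotomy (toLex (j, i)) (toLex (j', i')) with hlt | heq | hgt
  · exact absurd h.1 (h'.2 _ _ hlt)
  · simpa using heq
  · exact absurd h'.1 (h.2 _ _ hgt)

open Classical in
noncomputable def bubbleStep (v : Word N s) : Word N s :=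
  if h : ∃ p : Fin m × ℕ, IsFirstDescent v p.1 p.2 then
    swapAt v h.choose.1 h.choose.2 h.choose_spec.1.fst
  else v

lemma bubbleStep_eq {v : Word N s} {j : Fin m} {i : ℕ} (h : IsFirstDescent v j i) :
    bubbleStep v = swapAt v j i h.1.fst := by
  have hex : ∃ p : Fin m × ℕ, IsFirstDescent v p.1 p.2 := ⟨(j, i), h⟩
  have hswap : ∀ (j' : Fin m) (i' : ℕ) (h1 : i' + 1 < N j') (h2 : i + 1 < N j),
      j' = j → i' = i → swapAt v j' i' h1 = swapAt v j i h2 := by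
    rintro _ _ _ _ rfl rfl
    rfl
  rw [bubbleStep, dif_pos hex]
  exact hswap _ _ _ _ (hex.choose_spec.unique h).1 (hex.choose_spec.unique h).2

def weight (v : Word N s) : ℕ := ∑ j, ∑ k : Fin (N j), (N j - k) * (v j k : ℕ)

lemma weight_swapAt_lt {v : Word N s} {j : Fin m} {i : ℕ} (hd : IsDescent v j i) :
    weight (swapAt v j i hd.fst) < weight v := by
  obtain ⟨h, hlt⟩ := hd
  have hj : ∑ k : Fin (N j), (N j - k) * (swapAt v j i h j k : ℕ) <
      ∑ k : Fin (N j), (N j - k) * (v j k : ℕ) := by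
    simp only [swapAt, permAt_apply_self, adjSwap]
    exact sum_mul_comp_swap_lt (fun k : Fin (N j) => N j - k) (fun k => (v j k : ℕ))
      (by simp [Fin.ext_iff]) (Nat.sub_lt_sub_left (by omega) i.lt_succ_self) hlt
  refine Finset.sum_lt_sum (fun j' _ => ?_) ⟨j, Finset.mem_univ _, hj⟩
  by_cases hj' : j' = j
  · subst hj'
    exact hj.le
  · rw [swapAt_apply_of_ne v i h hj']

lemma weight_lt_weight_swapAt {v : Word N s} {j : Fin m} {i : ℕ} (h : i + 1 < N j)
    (hasc : v j ⟨i, by omega⟩ < v j ⟨i + 1, h⟩) : weight v < weight (swapAt v j i h) := by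
  simpa only [swapAt_swapAt] using weight_swapAt_lt (isDescent_swapAt_self h hasc)

lemma adj_bubbleStep {v : Word N s} {j : Fin m} {i : ℕ} (h : IsFirstDescent v j i) :
    (graph N s).Adj v (bubbleStep v) :=
  bubbleStep_eq h ▸ h.1.adj_swapAt

lemma weight_bubbleStep_lt {v : Word N s} {j : Fin m} {i : ℕ} (h : IsFirstDescent v j i) :
    weight (bubbleStep v) < weight v :=
  bubbleStep_eq h ▸ weight_swapAt_lt h.1

open Classical in
noncomputable def bubbleChain (v : Word N s) : (graph N s).Dart →₀ ℤ :=
  if h : ∃ p : Fin m × ℕ, IsFirstDescent v p.1 p.2 then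
    single ⟨(v, bubbleStep v), adj_bubbleStep h.choose_spec⟩ 1 + bubbleChain (bubbleStep v)
  else 0
termination_by weight v
decreasing_by exact weight_bubbleStep_lt h.choose_spec

lemma bubbleChain_eq {v x : Word N s} {j : Fin m} {i : ℕ} (h : IsFirstDescent v j i)
    (hx : swapAt v j i h.1.fst = x) (hvx : (graph N s).Adj v x) :
    bubbleChain v = single ⟨(v, x), hvx⟩ 1 + bubbleChain x := by
  have hstep : bubbleStep v = x := (bubbleStep_eq h).trans hx
  subst hstep
  rw [bubbleChain, dif_pos ⟨(j, i), h⟩]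

lemma isDescent_of_isDescent_swapAt_succ {v : Word N s} {j : Fin m} {i : ℕ} (h : i + 2 < N j)
    (hasc : v j ⟨i + 1, by omega⟩ < v j ⟨i + 2, h⟩)
    (hd : IsDescent (swapAt v j (i + 1) h) j i) :
    IsDescent v j i := by
  obtain ⟨h1, hlt⟩ := hd
  exact ⟨h1, hasc.trans (by simpa +arith [swapAt_apply_self] using hlt)⟩

/-- Swapping an ascent at `(j0, i0)` does not change the descents before `(j0, i0)`, except that
one at `(j0, i0 - 1)` may disappear; so a first descent of the new word before `(j0, i0)` is one of
the old word. -/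
lemma IsFirstDescent.of_swapAt {v : Word N s} {j0 j1 : Fin m} {i0 i1 : ℕ} (h0 : i0 + 1 < N j0)
    (hasc : v j0 ⟨i0, by omega⟩ < v j0 ⟨i0 + 1, h0⟩)
    (hw : IsFirstDescent (swapAt v j0 i0 h0) j1 i1) (hlt : toLex (j1, i1) < toLex (j0, i0)) :
    IsFirstDescent v j1 i1 := by
  simp only [Prod.Lex.toLex_lt_toLex] at hlt
  refine ⟨?_, fun j i hji hd => ?_⟩
  · by_cases hb : j1 = j0 ∧ i1 + 1 = i0
    · obtain ⟨rfl, rfl⟩ := hb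
      exact isDescent_of_isDescent_swapAt_succ h0 hasc hw.1
    · exact (isDescent_swapAt_iff v h0 (by omega)).mp hw.1
  · have hji' := hji
    simp only [Prod.Lex.toLex_lt_toLex] at hji'
    exact hw.2 j i hji ((isDescent_swapAt_iff v h0 (by omega)).mpr hd)

def CyclesGeneratedBelow (N s : Fin m → ℕ) (n : ℕ) : Prop :=
  ∀ x y (h : (graph N s).Adj x y), weight x < n → weight y < n →
    fundamentalCycle bubbleChain ⟨(x, y), h⟩ ∈ shortCycleSpan (graph N s)

lemma CyclesGeneratedBelow.mono {n n' : ℕ} (h : CyclesGeneratedBelow N s n) (hle : n' ≤ n) :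
    CyclesGeneratedBelow N s n' :=
  fun x y hxy hx hy => h x y hxy (by omega) (by omega)

lemma fundamentalCycle_mem_of_square {v : Word N s} {j0 j1 : Fin m} {i0 i1 : ℕ}
    (h0 : i0 + 1 < N j0) (hasc : v j0 ⟨i0, by omega⟩ < v j0 ⟨i0 + 1, h0⟩)
    (hv : IsFirstDescent v j1 i1) (hw : IsFirstDescent (swapAt v j0 i0 h0) j1 i1)
    (hfar : j1 ≠ j0 ∨ i1 + 1 < i0 ∨ i0 + 1 < i1) (hvw : (graph N s).Adj v (swapAt v j0 i0 h0))
    (IH : CyclesGeneratedBelow N s (weight (swapAt v j0 i0 h0))) :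
    fundamentalCycle bubbleChain ⟨(v, swapAt v j0 i0 h0), hvw⟩ ∈
      shortCycleSpan (graph N s) := by
  obtain ⟨h1, -⟩ := hv.1
  have hy : swapAt (swapAt v j0 i0 h0) j1 i1 h1 = swapAt (swapAt v j1 i1 h1) j0 i0 h0 :=
    swapAt_comm v h0 h1 (by omega)
  have hxy : (graph N s).Adj (swapAt v j1 i1 h1) (swapAt (swapAt v j1 i1 h1) j0 i0 h0) := by
    refine adj_swapAt _ j0 i0 h0 ?_
    rw [swapAt_apply_of_far v h1 _ (by omega), swapAt_apply_of_far v h1 _ (by omega)]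
    exact hasc.ne
  have hwv := weight_lt_weight_swapAt h0 hasc
  have hvx := weight_swapAt_lt hv.1
  have hwy := weight_swapAt_lt hw.1
  rw [hy] at hwy
  refine fundamentalCycle_mem_of_walk bubbleChain hvw hv.1.adj_swapAt (hy ▸ hw.1.adj_swapAt)
    (bubbleChain_eq hv rfl _) (bubbleChain_eq hw hy _) (.cons hxy.symm .nil) (Or.inl rfl) ?_
  simpa using IH _ _ hxy.symm hwy (by omega)

lemma fundamentalCycle_mem_of_hexagon {v : Word N s} {j : Fin m} {i : ℕ} (h : i + 2 < N j)
    (hasc : v j ⟨i + 1, by omega⟩ < v j ⟨i + 2, h⟩)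
    (hv : IsFirstDescent v j i) (hw : IsFirstDescent (swapAt v j (i + 1) h) j i)
    (hvw : (graph N s).Adj v (swapAt v j (i + 1) h))
    (IH : CyclesGeneratedBelow N s (weight (swapAt v j (i + 1) h))) :
    fundamentalCycle bubbleChain ⟨(v, swapAt v j (i + 1) h), hvw⟩ ∈
      shortCycleSpan (graph N s) := by
  -- With `a b c` the letters of `v` at `i, i + 1, i + 2`, we have `b < c < a`, and the
  -- hexagon is `v = abc, acb, y₁ = cab, y₂ = cba, y₃ = bca, x = bac`.
  have h1 : i + 1 < N j := by omega
  have hca : v j ⟨i + 2, h⟩ < v j ⟨i, by omega⟩ := by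
    simpa +arith [swapAt_apply_self] using hw.1.snd
  let y₁ := swapAt (swapAt v j (i + 1) h) j i h1
  let y₂ := swapAt y₁ j (i + 1) h
  let x := swapAt v j i h1
  let y₃ := swapAt x j (i + 1) h
  have hy₂ : swapAt y₃ j i h1 = y₂ := (swapAt_braid v j i h).symm
  have hd₁ : IsDescent y₁ j (i + 1) :=
    ⟨h, by simpa +arith [y₁, swapAt_apply_self] using hasc.trans hca⟩
  have hd₂ : IsDescent y₂ j i :=
    ⟨h1, by simpa +arith [y₂, y₁, swapAt_apply_self] using hasc⟩
  have hdx : IsDescent x j (i + 1) := ⟨h, by simpa +arith [x, swapAt_apply_self] using hca⟩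
  have hy₃ : swapAt y₂ j i h1 = y₃ := by rw [← hy₂, swapAt_swapAt]
  have a₁₂ : (graph N s).Adj y₁ y₂ := hd₁.adj_swapAt
  have a₂₃ : (graph N s).Adj y₂ y₃ := hy₃ ▸ hd₂.adj_swapAt
  have a₃ₓ : (graph N s).Adj y₃ x := hdx.adj_swapAt.symm
  have hwv : weight v < weight (swapAt v j (i + 1) h) := weight_lt_weight_swapAt h hasc
  have hw₁ : weight y₁ < weight (swapAt v j (i + 1) h) := weight_swapAt_lt hw.1
  have h₁₂ : weight y₂ < weight y₁ := weight_swapAt_lt hd₁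
  have hvx : weight x < weight v := weight_swapAt_lt hv.1
  have hx₃ : weight y₃ < weight x := weight_swapAt_lt hdx
  let p : (graph N s).Walk y₁ x := .cons a₁₂ (.cons a₂₃ (.cons a₃ₓ .nil))
  refine fundamentalCycle_mem_of_walk bubbleChain hvw hv.1.adj_swapAt hw.1.adj_swapAt
    (bubbleChain_eq hv rfl _) (bubbleChain_eq hw rfl _) p (Or.inr rfl) ?_
  simp only [p, Walk.darts_cons, Walk.darts_nil, List.mem_cons, List.not_mem_nil, or_false,
    forall_eq_or_imp, forall_eq]
  exact ⟨IH _ _ _ (by omega) (by omega), IH _ _ _ (by omega) (by omega),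
    IH _ _ _ (by omega) (by omega)⟩

lemma fundamentalCycle_mem_of_ascent {v w : Word N s} {j0 : Fin m} {i0 : ℕ} (h0 : i0 + 1 < N j0)
    (hasc : v j0 ⟨i0, by omega⟩ < v j0 ⟨i0 + 1, h0⟩) (hw : swapAt v j0 i0 h0 = w)
    (hvw : (graph N s).Adj v w) (IH : CyclesGeneratedBelow N s (weight w)) :
    fundamentalCycle bubbleChain ⟨(v, w), hvw⟩ ∈ shortCycleSpan (graph N s) := by
  subst hw
  rcases em (∃ j i, toLex (j, i) < toLex (j0, i0) ∧ IsDescent (swapAt v j0 i0 h0) j i) with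
    ⟨j, i, hlt, hd⟩ | hnone
  swap
  · have hfirst : IsFirstDescent (swapAt v j0 i0 h0) j0 i0 :=
      ⟨isDescent_swapAt_self h0 hasc, fun j i hlt hd => hnone ⟨j, i, hlt, hd⟩⟩
    exact fundamentalCycle_mem_of_eq_single_add bubbleChain hvw
      (bubbleChain_eq hfirst (swapAt_swapAt v j0 i0 h0) _)
  obtain ⟨j1, i1, hw1, hle⟩ := exists_isFirstDescent_le hd
  have hlt1 := hle.trans_lt hlt
  have hv1 := hw1.of_swapAt h0 hasc hlt1
  by_cases hbraid : j1 = j0 ∧ i1 + 1 = i0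
  · obtain ⟨rfl, rfl⟩ := hbraid
    exact fundamentalCycle_mem_of_hexagon h0 hasc hv1 hw1 hvw IH
  · simp only [Prod.Lex.toLex_lt_toLex] at hlt1
    exact fundamentalCycle_mem_of_square h0 hasc hv1 hw1 (by omega) hvw IH

lemma cyclesGeneratedBelow (n : ℕ) : CyclesGeneratedBelow N s n := by
  induction n with
  | zero => exact fun _ _ _ hx => absurd hx (Nat.not_lt_zero _)
  | succ n ih =>
    intro x y hxy hx hy
    obtain ⟨j, i, h, hne, rfl⟩ := exists_swapAt_of_adj hxy
    rcases hne.lt_or_gt with hasc | hdesc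
    · exact fundamentalCycle_mem_of_ascent h hasc rfl hxy (ih.mono (by omega))
    · rw [← fundamentalCycle_symm_mem_iff]
      refine fundamentalCycle_mem_of_ascent h ?_ (swapAt_swapAt x j i h) hxy.symm
        (ih.mono (by omega))
      simpa [swapAt_apply_self] using hdesc

theorem fundamentalCycle_bubbleChain_mem (d : (graph N s).Dart) :
    fundamentalCycle bubbleChain d ∈ shortCycleSpan (graph N s) :=
  cyclesGeneratedBelow (weight d.toProd.1 + weight d.toProd.2 + 1) _ _ d.adj (by omega) (by omega)

end BoxPermutograph

theorem stmt8_general (m : ℕ) (N s : Fin m → ℕ)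
    (c : (boxProdFamily fun j => permutograph (N j) (s j)).Dart →₀ ℤ)
    (hc : graphBoundary (boxProdFamily fun j => permutograph (N j) (s j)) c = 0) :
    c ∈ Submodule.span ℤ
      {x : (boxProdFamily fun j => permutograph (N j) (s j)).Dart →₀ ℤ |
        ∃ (u : ∀ j : Fin m, Fin (N j) → Fin (s j))
          (w : (boxProdFamily fun j => permutograph (N j) (s j)).Walk u u),
          (w.length = 2 ∨ w.length = 4 ∨ w.length = 6) ∧ x = edgeChain w} :=
  mem_shortCycleSpan_of_graphBoundary_eq_zero BoxPermutograph.bubbleChain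
    BoxPermutograph.fundamentalCycle_bubbleChain_mem hc

/-- The first homology of a box product of permutographs is generated by
closed walks of length `2`, `4` and `6`: every `1`-cycle (element of `ker ∂`) is a
`ℤ`-linear combination of edge chains of closed walks of length `2`, `4` and `6`. -/
theorem stmt8 (m : ℕ) (N s : Fin m → ℕ) (hN : ∀ j, 1 ≤ N j) (hs : ∀ j, 1 ≤ s j)
    (c : (boxProdFamily fun j => permutograph (N j) (s j)).Dart →₀ ℤ)
    (hc : graphBoundary (boxProdFamily fun j => permutograph (N j) (s j)) c = 0) :
    c ∈ Submodule.span ℤ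
      {x : (boxProdFamily fun j => permutograph (N j) (s j)).Dart →₀ ℤ |
        ∃ (u : ∀ j : Fin m, Fin (N j) → Fin (s j))
          (w : (boxProdFamily fun j => permutograph (N j) (s j)).Walk u u),
          (w.length = 2 ∨ w.length = 4 ∨ w.length = 6) ∧ x = edgeChain w} :=
  stmt8_general m N s c hc
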